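/- Let Q₁(r, θ) = (r² − 2mr + a²cos²θ)(r² − a²cos²θ)/(m(r² + a²cos²θ)^{3/2}) be the Abdelqader–Lake invariant Q₁ of the Kerr black hole. Assume m > 0 and 0 < a < m. Then for every θ: (i) if r > m + √(m² − a²cos²θ) then Q₁(r, θ) > 0; (ii) Q₁(m + √(m² − a²cos²θ), θ) = 0; (iii) if a|cosθ| < r < m + √(m² − a²cos²θ) then Q₁(r, θ) < 0. Thus Q₁ is strictly positive outside the outer ergosurface, vanishes on it, and becomes negative as soon as one crosses into the ergosphere, so Q₁ detects the outer ergosurface. -/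
import Mathlib


/-- The Abdelqader–Lake invariant `Q₁` of the Kerr black hole (closed form,
`Λ = 0` case): `Q₁(r, θ) = (r² − 2mr + a²cos²θ)(r² − a²cos²θ)/(m (r² + a²cos²θ)^{3/2})`. -/
noncomputable def kerrQ1 (a m r θ : ℝ) : ℝ :=
  (r ^ 2 - 2 * m * r + a ^ 2 * Real.cos θ ^ 2) * (r ^ 2 - a ^ 2 * Real.cos θ ^ 2) /
    (m * (r ^ 2 + a ^ 2 * Real.cos θ ^ 2) ^ ((3 : ℝ) / 2))

/-- For `0 < a < m`, the Kerr invariant `Q₁` is strictly positive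
outside the outer ergosurface `r = m + √(m² − a²cos²θ)`, vanishes on it, and is
strictly negative between the ergosurface and the cone `r = a|cosθ|`; hence `Q₁`
detects the outer ergosurface. -/
theorem kerrQ1_detects_outer_ergosurface (a m : ℝ) (hm : 0 < m) (ha : 0 < a)
    (ham : a < m) (θ : ℝ) :
    (∀ r : ℝ, m + Real.sqrt (m ^ 2 - a ^ 2 * Real.cos θ ^ 2) < r → 0 < kerrQ1 a m r θ) ∧
    kerrQ1 a m (m + Real.sqrt (m ^ 2 - a ^ 2 * Real.cos θ ^ 2)) θ = 0 ∧
    (∀ r : ℝ, a * |Real.cos θ| < r →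
      r < m + Real.sqrt (m ^ 2 - a ^ 2 * Real.cos θ ^ 2) → kerrQ1 a m r θ < 0) := by
  set c : ℝ := a ^ 2 * Real.cos θ ^ 2 with hc_def
  have hc0 : 0 ≤ c := by positivity
  have hcm : c ≤ m ^ 2 := by
    have h1 : Real.cos θ ^ 2 ≤ 1 := by
      have := Real.neg_one_le_cos θ
      have := Real.cos_le_one θ
      nlinarith
    nlinarith
  set s : ℝ := Real.sqrt (m ^ 2 - c) with hs_def
  have hs0 : 0 ≤ s := Real.sqrt_nonneg _
  have hs2 : s ^ 2 = m ^ 2 - c := Real.sq_sqrt (by linarith)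
  have hsm : s ≤ m := by nlinarith
  have hsqrtc : Real.sqrt c = a * |Real.cos θ| := by
    rw [hc_def, show a ^ 2 * Real.cos θ ^ 2 = (a * |Real.cos θ|) ^ 2 by
      rw [mul_pow, sq_abs], Real.sqrt_sq (by positivity)]
  -- denominator positivity for r > 0
  have hden : ∀ r : ℝ, 0 < r → 0 < m * (r ^ 2 + c) ^ ((3:ℝ)/2) := by
    intro r hr
    have : (0:ℝ) < r ^ 2 + c := by nlinarith
    exact mul_pos hm (Real.rpow_pos_of_pos this _)
  refine ⟨?_, ?_, ?_⟩
  · intro r hr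
    have hr0 : 0 < r := by linarith
    have hnum1 : 0 < r ^ 2 - 2 * m * r + c := by nlinarith
    have hnum2 : 0 < r ^ 2 - c := by nlinarith
    have := hden r hr0
    exact div_pos (mul_pos hnum1 hnum2) this
  · unfold kerrQ1
    have : (m + s) ^ 2 - 2 * m * (m + s) + c = 0 := by nlinarith
    rw [show (m + s) ^ 2 - 2 * m * (m + s) + a ^ 2 * Real.cos θ ^ 2 = 0 from this]
    simp
  · intro r hr1 hr2
    have hr0 : 0 < r := lt_of_le_of_lt (by positivity) hr1
    have hrc : c < r ^ 2 := by
      have : Real.sqrt c < r := by rw [hsqrtc]; exact hr1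
      nlinarith [Real.sq_sqrt hc0, Real.sqrt_nonneg c]
    have hms : m - s ≤ Real.sqrt c := by
      have h1 : (m - s) ^ 2 ≤ c := by nlinarith
      calc m - s ≤ Real.sqrt ((m - s) ^ 2) := by
            rcases le_or_gt (m - s) 0 with h | h
            · exact le_trans h (Real.sqrt_nonneg _)
            · rw [Real.sqrt_sq h.le]
        _ ≤ Real.sqrt c := Real.sqrt_le_sqrt h1
    have hrms : m - s < r := lt_of_le_of_lt hms (by rw [hsqrtc]; exact hr1)
    have hnum1 : r ^ 2 - 2 * m * r + c < 0 := by nlinarith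
    have hnum2 : 0 < r ^ 2 - c := by linarith
    have := hden r hr0
    exact div_neg_of_neg_of_pos (mul_neg_of_neg_of_pos hnum1 hnum2) this
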